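/- If Λ is a positive random variable with finite second moment and N ∼ Po(Λ), then with N^s the size-biased version of N, under any coupling where N^s is stochastically larger than N + 1 (which exists), E|N + 1 - N^s| = E[N^s - N - 1] = Var(Λ)/E[Λ]. -/

import Mathlib

/-!
Conditionally on `Λ = x`, the Poisson weights give `E[N] = x` and `E[N²] = x² + x`; integrating
in `x` (dominated convergence for the series) yields `E[N] = E[Λ]` and `E[N²] = E[Λ²] + E[Λ]`.
Hence `E[N^s] = E[N²] / E[N] = (E[Λ²] + E[Λ]) / E[Λ]`, so
`E[N^s - N - 1] = (E[Λ²] - E[Λ]²) / E[Λ] = Var(Λ) / E[Λ]`; under the domination `N + 1 ≤ N^s` the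
integrand `|N + 1 - N^s|` is just `N^s - N - 1`.
-/

open MeasureTheory ProbabilityTheory Real
open scoped Nat ENNReal

lemma hasSum_pow_div_factorial (x : ℝ) : HasSum (fun k => x ^ k / k !) (exp x) :=
  exp_eq_exp_ℝ ▸ NormedSpace.expSeries_div_hasSum_exp x

lemma hasSum_natCast_mul_pow_div_factorial {g : ℕ → ℝ} {x a : ℝ}
    (h : HasSum (fun k => g (k + 1) * (x ^ k / k !)) a) :
    HasSum (fun k : ℕ => k * g k * (x ^ k / k !)) (x * a) := by
  have hsucc (k : ℕ) : ((k + 1 : ℕ) : ℝ) * g (k + 1) * (x ^ (k + 1) / (k + 1)!)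
      = x * (g (k + 1) * (x ^ k / k !)) := by
    rw [Nat.factorial_succ]
    push_cast
    field_simp
    ring
  rw [← hasSum_nat_add_iff' 1]
  simpa only [hsucc, Finset.sum_range_one, Nat.cast_zero, zero_mul, sub_zero] using h.mul_left x

lemma exp_neg_mul_exp_self (x : ℝ) : exp (-x) * exp x = 1 := by
  rw [← exp_add, neg_add_cancel, exp_zero]

lemma hasSum_natCast_mul_poisson (x : ℝ) :
    HasSum (fun k : ℕ => k * (exp (-x) * x ^ k / k !)) x := by
  have h := (hasSum_natCast_mul_pow_div_factorial (g := 1)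
    (by simpa using hasSum_pow_div_factorial x)).mul_left (exp (-x))
  rw [show exp (-x) * (x * exp x) = x by linear_combination x * exp_neg_mul_exp_self x] at h
  exact h.congr_fun fun k => by simp only [Pi.one_apply]; ring

lemma hasSum_natCast_sq_mul_poisson (x : ℝ) :
    HasSum (fun k : ℕ => (k : ℝ) ^ 2 * (exp (-x) * x ^ k / k !)) (x ^ 2 + x) := by
  have hexp := hasSum_pow_div_factorial x
  have hmean := hasSum_natCast_mul_pow_div_factorial (g := 1) (by simpa using hexp)
  have h := (hasSum_natCast_mul_pow_div_factorial (g := Nat.cast)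
    (by simpa [add_mul] using hmean.add hexp)).mul_left (exp (-x))
  rw [show exp (-x) * (x * (x * exp x + exp x)) = x ^ 2 + x by
    linear_combination (x ^ 2 + x) * exp_neg_mul_exp_self x] at h
  exact h.congr_fun fun k => by ring

section Moments

variable {Ω : Type*} [MeasurableSpace Ω] {μ : Measure Ω}

lemma integral_pos_of_ae_pos [NeZero μ] {f : Ω → ℝ} (hf : ∀ᵐ ω ∂μ, 0 < f ω)
    (hfi : Integrable f μ) : 0 < ∫ ω, f ω ∂μ := by
  rw [integral_pos_iff_support_of_nonneg_ae (hf.mono fun _ h => h.le) hfi, pos_iff_ne_zero]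
  intro h
  rw [measure_eq_zero_iff_ae_notMem] at h
  obtain ⟨ω, hpos, hzero⟩ := (hf.and h).exists
  exact hzero hpos.ne'

lemma lintegral_natCast_eq_tsum {X : Ω → ℕ} (hX : Measurable X) :
    ∫⁻ ω, (X ω : ℝ≥0∞) ∂μ = ∑' k : ℕ, k * μ {ω | X ω = k} := by
  rw [← lintegral_map (f := fun k : ℕ => (k : ℝ≥0∞)) measurable_from_top hX, lintegral_countable']
  refine tsum_congr fun k => ?_
  rw [Measure.map_apply hX (measurableSet_singleton k)]
  rfl

lemma integrable_natCast_and_integral_eq_of_hasSum [IsFiniteMeasure μ] {X : Ω → ℕ}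
    (hX : Measurable X) {m : ℝ} (h : HasSum (fun k : ℕ => k * (μ {ω | X ω = k}).toReal) m) :
    Integrable (fun ω => (X ω : ℝ)) μ ∧ ∫ ω, (X ω : ℝ) ∂μ = m := by
  have hlint : ∫⁻ ω, (X ω : ℝ≥0∞) ∂μ = ENNReal.ofReal m := by
    rw [lintegral_natCast_eq_tsum hX, ← h.tsum_eq,
      ENNReal.ofReal_tsum_of_nonneg (fun k => by positivity) h.summable]
    refine tsum_congr fun k => ?_
    rw [ENNReal.ofReal_mul (by positivity), ENNReal.ofReal_natCast,
      ENNReal.ofReal_toReal (measure_ne_top _ _)]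
  have hXm : AEMeasurable (fun ω => (X ω : ℝ≥0∞)) μ := by fun_prop
  have hcast : (fun ω => (X ω : ℝ)) = fun ω => (X ω : ℝ≥0∞).toReal := by simp
  rw [hcast]
  refine ⟨integrable_toReal_of_lintegral_ne_top hXm (by simp [hlint]), ?_⟩
  rw [integral_toReal hXm (by simp), hlint, ENNReal.toReal_ofReal (h.nonneg fun k => by positivity)]

end Moments

section MixedPoisson

variable {Ω : Type*} [MeasurableSpace Ω]

/-- `N ∼ Po(Λ)` under `μ`. -/
def IsMixedPoisson (N : Ω → ℕ) (Λ : Ω → ℝ) (μ : Measure Ω) : Prop :=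
  ∀ k : ℕ, (μ {ω | N ω = k}).toReal = ∫ ω, exp (-Λ ω) * Λ ω ^ k / (k ! : ℝ) ∂μ

variable {μ : Measure Ω} {Λ : Ω → ℝ} {N : Ω → ℕ}

lemma hasSum_mul_integral_poisson {f : ℕ → ℝ} (hf : ∀ k, 0 ≤ f k) {F : ℝ → ℝ}
    (hF : ∀ x, 0 ≤ x → HasSum (fun k => f k * (exp (-x) * x ^ k / k !)) (F x))
    (hΛ : AEMeasurable Λ μ) (hΛ0 : ∀ᵐ ω ∂μ, 0 ≤ Λ ω) (hFint : Integrable (fun ω => F (Λ ω)) μ) :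
    HasSum (fun k => f k * ∫ ω, exp (-Λ ω) * Λ ω ^ k / (k ! : ℝ) ∂μ) (∫ ω, F (Λ ω) ∂μ) := by
  simp_rw [← integral_const_mul]
  refine hasSum_integral_of_dominated_convergence (fun k ω => f k * (exp (-Λ ω) * Λ ω ^ k / k !))
    (fun k => by fun_prop) (fun k => hΛ0.mono fun ω hω => ?_)
    (hΛ0.mono fun ω hω => (hF _ hω).summable)
    (hFint.congr (hΛ0.mono fun ω hω => (hF _ hω).tsum_eq.symm)) (hΛ0.mono fun ω hω => hF _ hω)
  rw [Real.norm_of_nonneg (by have := hf k; positivity)]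

lemma IsMixedPoisson.hasSum_natCast_mul (hN : IsMixedPoisson N Λ μ) (hΛ : AEMeasurable Λ μ)
    (hΛ0 : ∀ᵐ ω ∂μ, 0 ≤ Λ ω) (hΛint : Integrable Λ μ) :
    HasSum (fun k : ℕ => (k : ℝ) * (μ {ω | N ω = k}).toReal) (∫ ω, Λ ω ∂μ) :=
  (hasSum_mul_integral_poisson Nat.cast_nonneg (fun x _ => hasSum_natCast_mul_poisson x)
    hΛ hΛ0 hΛint).congr_fun fun k => by rw [hN k]

lemma IsMixedPoisson.hasSum_natCast_sq_mul (hN : IsMixedPoisson N Λ μ) (hΛ : AEMeasurable Λ μ)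
    (hΛ0 : ∀ᵐ ω ∂μ, 0 ≤ Λ ω) (hΛint : Integrable Λ μ)
    (hΛsq : Integrable (fun ω => Λ ω ^ 2) μ) :
    HasSum (fun k : ℕ => (k : ℝ) ^ 2 * (μ {ω | N ω = k}).toReal) (∫ ω, Λ ω ^ 2 + Λ ω ∂μ) :=
  (hasSum_mul_integral_poisson (fun k => sq_nonneg (k : ℝ))
    (fun x _ => hasSum_natCast_sq_mul_poisson x) hΛ hΛ0 (hΛsq.add hΛint)).congr_fun
    fun k => by rw [hN k]

end MixedPoisson

theorem sizeBiased_mixedPoisson_coupling_general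
    {Ω : Type*} [MeasureSpace Ω] [IsProbabilityMeasure (ℙ : Measure Ω)]
    (Lam : Ω → ℝ)
    (hLpos : ∀ᵐ ω ∂ℙ, 0 < Lam ω) (hL2 : MemLp Lam 2 ℙ)
    (N Ns : Ω → ℕ) (hN : Measurable N) (hNs : Measurable Ns)
    (hmp : ∀ k : ℕ, (ℙ {ω | N ω = k}).toReal
      = ∫ ω, Real.exp (-Lam ω) * Lam ω ^ k / (Nat.factorial k) ∂ℙ)
    (hNsize : ∀ j : ℕ, (ℙ {ω | Ns ω = j}).toReal
      = j * (ℙ {ω | N ω = j}).toReal / ∫ ω, (N ω : ℝ) ∂ℙ)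
    (hdom : ∀ᵐ ω ∂ℙ, N ω + 1 ≤ Ns ω) :
    (∫ ω, |(N ω : ℝ) + 1 - (Ns ω : ℝ)| ∂ℙ = variance Lam ℙ / ∫ ω, Lam ω ∂ℙ)
    ∧ (∫ ω, ((Ns ω : ℝ) - (N ω : ℝ) - 1) ∂ℙ = variance Lam ℙ / ∫ ω, Lam ω ∂ℙ) := by
  have hPo : IsMixedPoisson N Lam ℙ := hmp
  have hLam0 : ∀ᵐ ω ∂ℙ, 0 ≤ Lam ω := hLpos.mono fun _ h => h.le
  have hLint : Integrable Lam ℙ := hL2.integrable one_le_two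
  have hLsq : Integrable (fun ω => Lam ω ^ 2) ℙ := hL2.integrable_sq
  have hmean_pos : 0 < ∫ ω, Lam ω ∂ℙ := integral_pos_of_ae_pos hLpos hLint
  obtain ⟨hNint, hEN⟩ := integrable_natCast_and_integral_eq_of_hasSum hN
    (hPo.hasSum_natCast_mul hL2.aemeasurable hLam0 hLint)
  obtain ⟨hNsint, hENs⟩ := integrable_natCast_and_integral_eq_of_hasSum hNs
    (((hPo.hasSum_natCast_sq_mul hL2.aemeasurable hLam0 hLint hLsq).div_const
      (∫ ω, Lam ω ∂ℙ)).congr_fun fun j => by rw [hNsize, hEN]; ring)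
  have hgap : ∫ ω, ((Ns ω : ℝ) - (N ω : ℝ) - 1) ∂ℙ = variance Lam ℙ / ∫ ω, Lam ω ∂ℙ := by
    have hdiff : Integrable (fun ω => (Ns ω : ℝ) - N ω) ℙ := hNsint.sub hNint
    rw [integral_sub hdiff (integrable_const 1), integral_sub hNsint hNint, hENs, hEN,
      integral_add hLsq hLint, variance_eq_sub hL2]
    simp only [integral_const, probReal_univ, smul_eq_mul, mul_one, Pi.pow_apply]
    field_simp
    ring
  refine ⟨?_, hgap⟩
  rw [← hgap]
  refine integral_congr_ae (hdom.mono fun ω h => ?_)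
  have h' : (N ω : ℝ) + 1 ≤ Ns ω := by exact_mod_cast h
  simp only [abs_of_nonpos (by linarith : (N ω : ℝ) + 1 - Ns ω ≤ 0)]
  ring

/-- For a mixed Poisson `N ∼ Po(Λ)`, under any coupling in which `N^s` dominates `N + 1`,
`E|N + 1 - N^s| = E[N^s - N - 1] = Var(Λ)/E[Λ]`. -/
theorem sizeBiased_mixedPoisson_coupling
    {Ω : Type*} [MeasureSpace Ω] [IsProbabilityMeasure (ℙ : Measure Ω)]
    (Lam : Ω → ℝ) (hLam : Measurable Lam)
    (hLpos : ∀ᵐ ω ∂ℙ, 0 < Lam ω) (hL2 : MemLp Lam 2 ℙ)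
    (N Ns : Ω → ℕ) (hN : Measurable N) (hNs : Measurable Ns)
    (hNsint : Integrable (fun ω => (Ns ω : ℝ)) ℙ)
    (hmp : ∀ k : ℕ, (ℙ {ω | N ω = k}).toReal
      = ∫ ω, Real.exp (-Lam ω) * Lam ω ^ k / (Nat.factorial k) ∂ℙ)
    (hNsize : ∀ j : ℕ, (ℙ {ω | Ns ω = j}).toReal
      = j * (ℙ {ω | N ω = j}).toReal / ∫ ω, (N ω : ℝ) ∂ℙ)
    (hdom : ∀ᵐ ω ∂ℙ, N ω + 1 ≤ Ns ω) :
    (∫ ω, |(N ω : ℝ) + 1 - (Ns ω : ℝ)| ∂ℙ = variance Lam ℙ / ∫ ω, Lam ω ∂ℙ)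
    ∧ (∫ ω, ((Ns ω : ℝ) - (N ω : ℝ) - 1) ∂ℙ = variance Lam ℙ / ∫ ω, Lam ω ∂ℙ) :=
  sizeBiased_mixedPoisson_coupling_general Lam hLpos hL2 N Ns hN hNs hmp hNsize hdom
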